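/- Let d ≤ m be positive integers, H a d×m real matrix with rank d (full row rank), R a symmetric positive definite d×d real matrix, Σ₀ a symmetric positive definite m×m real matrix, μ₀ ∈ ℝ^m, and ŷ = Hμ₀. Define the posterior precision Σ₁⁻¹ = Σ₀⁻¹ + Hᵀ R⁻¹ H with Σ₁ its inverse, the Kalman gain K = Σ₁ Hᵀ R⁻¹, and for any observation y' ∈ ℝ^d the posterior mean μ(y') = μ₀ + K(y' − ŷ). Fix an observation y ∈ ℝ^d, and define the posterior influence function PIF(y^c) = (1/2)(μ(y) − μ(y^c))ᵀ Σ₁⁻¹ (μ(y) − μ(y^c)) = (1/2)(y − y^c)ᵀ Kᵀ Σ₁⁻¹ K (y − y^c). Then PIF is unbounded: for every M ∈ ℝ there exists y^c ∈ ℝ^d with PIF(y^c) > M. Hence the standard Kalman filter posterior is not outlier robust. -/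

import Mathlib

open Matrix

/-- The Kalman posterior precision `Σ₁⁻¹ = Σ₀⁻¹ + Hᵀ R⁻¹ H`. -/
noncomputable def kfPrec {d m : ℕ} (H : Matrix (Fin d) (Fin m) ℝ)
    (R : Matrix (Fin d) (Fin d) ℝ) (S0 : Matrix (Fin m) (Fin m) ℝ) :
    Matrix (Fin m) (Fin m) ℝ :=
  S0⁻¹ + Hᵀ * R⁻¹ * H

/-- The Kalman gain `K = Σ₁ Hᵀ R⁻¹`. -/
noncomputable def kfGain {d m : ℕ} (H : Matrix (Fin d) (Fin m) ℝ)
    (R : Matrix (Fin d) (Fin d) ℝ) (S0 : Matrix (Fin m) (Fin m) ℝ) :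
    Matrix (Fin m) (Fin d) ℝ :=
  (kfPrec H R S0)⁻¹ * Hᵀ * R⁻¹

/-- The posterior influence function of the standard Kalman filter,
`PIF(y^c) = (1/2)(y − y^c)ᵀ Kᵀ Σ₁⁻¹ K (y − y^c)`. -/
noncomputable def kfPIF {d m : ℕ} (H : Matrix (Fin d) (Fin m) ℝ)
    (R : Matrix (Fin d) (Fin d) ℝ) (S0 : Matrix (Fin m) (Fin m) ℝ)
    (y yc : Fin d → ℝ) : ℝ :=
  (1 / 2) * ((y - yc) ⬝ᵥ ((kfGain H R S0)ᵀ * kfPrec H R S0 * kfGain H R S0).mulVec (y - yc))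

/-! Full row rank of `H` makes `Hᵀ` injective, hence so is the gain `K = Σ₁ Hᵀ R⁻¹`, and
`Kᵀ Σ₁⁻¹ K` is positive definite. The PIF is half this positive definite form evaluated at
`y − y^c`, and such a form grows quadratically along every ray. -/

lemma kfPrec_posDef {d m : ℕ} (H : Matrix (Fin d) (Fin m) ℝ)
    {R : Matrix (Fin d) (Fin d) ℝ} (hR : R.PosDef)
    {S0 : Matrix (Fin m) (Fin m) ℝ} (hS0 : S0.PosDef) : (kfPrec H R S0).PosDef :=
  hS0.inv.add_posSemidef <| by
    simpa using hR.inv.posSemidef.conjTranspose_mul_mul_same H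

theorem Matrix.mulVec_transpose_injective_of_rank_eq {m n K : Type*} [Fintype m] [Fintype n]
    [Field K]
    {A : Matrix m n K} (hA : A.rank = Fintype.card m) : Function.Injective Aᵀ.mulVec := by
  rw [mulVec_injective_iff, col_transpose, linearIndependent_iff_card_eq_finrank_span,
    Set.finrank, ← rank_eq_finrank_span_row, hA]

lemma kfGain_mulVec_injective {d m : ℕ} {H : Matrix (Fin d) (Fin m) ℝ} (hH : H.rank = d)
    {R : Matrix (Fin d) (Fin d) ℝ} (hR : R.PosDef)
    {S0 : Matrix (Fin m) (Fin m) ℝ} (hS0 : S0.PosDef) :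
    Function.Injective (kfGain H R S0).mulVec := by
  have hHT : Function.Injective Hᵀ.mulVec :=
    mulVec_transpose_injective_of_rank_eq (by rw [hH, Fintype.card_fin])
  have hK : (kfGain H R S0).mulVec = (kfPrec H R S0)⁻¹.mulVec ∘ Hᵀ.mulVec ∘ R⁻¹.mulVec := by
    ext v : 1
    simp only [kfGain, Function.comp_apply, mulVec_mulVec, Matrix.mul_assoc]
  rw [hK]
  exact (mulVec_injective_of_isUnit (kfPrec_posDef H hR hS0).inv.isUnit).comp
    (hHT.comp (mulVec_injective_of_isUnit hR.inv.isUnit))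

theorem Matrix.PosDef.exists_lt_dotProduct_mulVec {n : Type*} [Fintype n] [Nonempty n]
    {A : Matrix n n ℝ} (hA : A.PosDef) (M : ℝ) : ∃ w : n → ℝ, M < w ⬝ᵥ A *ᵥ w := by
  obtain ⟨v, hv⟩ := exists_ne (0 : n → ℝ)
  have hc : 0 < v ⬝ᵥ A *ᵥ v := by simpa using hA.dotProduct_mulVec_pos hv
  obtain ⟨t, ht⟩ :=
    ((Filter.tendsto_pow_atTop two_ne_zero).atTop_mul_const hc).eventually_gt_atTop M |>.exists
  refine ⟨t • v, ?_⟩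
  rwa [mulVec_smul, dotProduct_smul, smul_dotProduct, smul_eq_mul, smul_eq_mul, ← mul_assoc,
    ← sq]

theorem kf_pif_unbounded_general {d m : ℕ} (hd : 0 < d)
    (H : Matrix (Fin d) (Fin m) ℝ) (hH : H.rank = d)
    (R : Matrix (Fin d) (Fin d) ℝ) (hR : R.PosDef)
    (S0 : Matrix (Fin m) (Fin m) ℝ) (hS0 : S0.PosDef)
    (y : Fin d → ℝ) :
    ∀ M : ℝ, ∃ yc : Fin d → ℝ, M < kfPIF H R S0 y yc := by
  intro M
  have : Nonempty (Fin d) := ⟨⟨0, hd⟩⟩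
  have hQ : ((kfGain H R S0)ᵀ * kfPrec H R S0 * kfGain H R S0).PosDef :=
    (kfPrec_posDef H hR hS0).conjTranspose_mul_mul_same (kfGain_mulVec_injective hH hR hS0)
  obtain ⟨w, hw⟩ := hQ.exists_lt_dotProduct_mulVec (2 * M)
  refine ⟨y - w, ?_⟩
  rw [kfPIF, sub_sub_cancel]
  linarith

/-- Lemmas D.1/D.3: the posterior influence function of the standard (extended) Kalman
filter is unbounded, so the filter is not outlier robust. -/
theorem kf_pif_unbounded {d m : ℕ} (hd : 0 < d) (hm : 0 < m) (hdm : d ≤ m)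
    (H : Matrix (Fin d) (Fin m) ℝ) (hH : H.rank = d)
    (R : Matrix (Fin d) (Fin d) ℝ) (hR : R.PosDef)
    (S0 : Matrix (Fin m) (Fin m) ℝ) (hS0 : S0.PosDef)
    (μ₀ : Fin m → ℝ) (y : Fin d → ℝ) :
    ∀ M : ℝ, ∃ yc : Fin d → ℝ, M < kfPIF H R S0 y yc :=
  kf_pif_unbounded_general hd H hH R hR S0 hS0 y
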